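/- Along any sequence {x^k} generated by the algorithm, the successive block updates vanish in the limit: for every i ∈ {1,…,n}, ‖x^{k,i} − x^{k,i−1}‖ = ‖x_i^k − x_i^{k−1}‖ → 0 as k → ∞. -/

import Mathlib

open Finset Filter

noncomputable def obj {d n : ℕ} {J : Type*} (a : J → EuclideanSpace ℝ (Fin d))
    (A : Fin n → Finset J) (dhat : Fin n → J → ℝ)
    (B : Fin n → Finset (Fin n)) (lhat : Fin n → Fin n → ℝ)
    (x : Fin n → EuclideanSpace ℝ (Fin d)) : ℝ :=
  (∑ i, ∑ j ∈ A i, max (‖x i - a j‖ - dhat i j) 0 ^ 2)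
    + (1 / 2) * ∑ i, ∑ q ∈ B i, max (‖x i - x q‖ - lhat i q) 0 ^ 2

noncomputable def projBall {d : ℕ} (a : EuclideanSpace ℝ (Fin d)) (r : ℝ)
    (z : EuclideanSpace ℝ (Fin d)) : EuclideanSpace ℝ (Fin d) :=
  if ‖z - a‖ ≤ r then z else a + (r / ‖z - a‖) • (z - a)

/-- The Coop. PPM algorithm: `X (k+1)` is obtained from `X k` by updating the
blocks successively for `i = 1, …, n`. -/
def IsPPM {d n : ℕ} {J : Type*} (a : J → EuclideanSpace ℝ (Fin d))
    (A : Fin n → Finset J) (dhat : Fin n → J → ℝ)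
    (B : Fin n → Finset (Fin n)) (lhat : Fin n → Fin n → ℝ)
    (X : ℕ → Fin n → EuclideanSpace ℝ (Fin d)) : Prop :=
  ∀ (k : ℕ) (i : Fin n),
    X (k + 1) i = (1 / 2 : ℝ) • X k i
      + (1 / (2 * (((A i).card : ℝ) + ((B i).card : ℝ)))) •
        ((∑ j ∈ A i, projBall (a j) (dhat i j) (X k i))
          + ∑ q ∈ B i, projBall (if q < i then X (k + 1) q else X k q) (lhat i q) (X k i))

/-- The intermediate configuration `x^{k+1, m}`: the first `m` blocks are those of
`X (k+1)` and the remaining blocks are those of `X k`. -/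
def interm {d n : ℕ} (X : ℕ → Fin n → EuclideanSpace ℝ (Fin d)) (k m : ℕ) :
    Fin n → EuclideanSpace ℝ (Fin d) :=
  fun t => if (t : ℕ) < m then X (k + 1) t else X k t

/-!
Since `max (‖z - c‖ - r) 0` is the distance from `z` to the ball `B(c, r)`, the part of `f`
depending on block `i` is a sum of `M = |A_i| + |B_i|` squared distances to balls, and the block
update is the midpoint of the current point `y` and the mean of its projections `p_m` onto these
balls. Expanding around the new point `x` gives `∑ ‖y - p_m‖² = ∑ ‖x - p_m‖² + 3M ‖x - y‖²`, and
`dist(x, ball) ≤ ‖x - p_m‖`, so the update lowers that part of `f` by at least `‖x - y‖²`. The pair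
terms being symmetric, this gives `f(x^{k,i}) + ‖x_i^k - x_i^{k-1}‖² ≤ f(x^{k,i-1})`, hence
`f(x^k) + ‖x_i^k - x_i^{k-1}‖² ≤ f(x^{k-1})`; as `f ≥ 0`, the squared steps are summable.
-/

theorem max_norm_sub_sub_le_norm_sub {E : Type*} [SeminormedAddCommGroup E] {a p : E} {r : ℝ}
    (hp : ‖p - a‖ ≤ r) (x : E) : max (‖x - a‖ - r) 0 ≤ ‖x - p‖ :=
  max_le (by linarith [norm_sub_le_norm_sub_add_norm_sub x p a]) (norm_nonneg _)

section Averaging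

variable {E : Type*} [NormedAddCommGroup E] [InnerProductSpace ℝ E]

theorem sum_norm_sub_sq_eq_of_eq_half_add_mean {ι : Type*} {S : Finset ι} (hS : S.Nonempty)
    (p : ι → E) {y x : E} (hx : x = (1 / 2 : ℝ) • y + (1 / (2 * (#S : ℝ))) • ∑ m ∈ S, p m) :
    ∑ m ∈ S, ‖y - p m‖ ^ 2 = ∑ m ∈ S, ‖x - p m‖ ^ 2 + 3 * (#S : ℝ) * ‖x - y‖ ^ 2 := by
  set M : ℝ := (#S : ℝ)
  have hM : M ≠ 0 := by simp [M, hS.ne_empty]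
  have hsum : ∑ m ∈ S, p m = (2 * M) • x - M • y := by
    rw [hx]
    match_scalars
    · field_simp
    · field_simp
      ring
  have hcross : ∑ m ∈ S, (x - p m) = M • (y - x) := by
    rw [Finset.sum_sub_distrib, Finset.sum_const, hsum, ← Nat.cast_smul_eq_nsmul ℝ]
    module
  have hsplit : ∀ m ∈ S, ‖y - p m‖ ^ 2
      = ‖y - x‖ ^ 2 + 2 * inner ℝ (y - x) (x - p m) + ‖x - p m‖ ^ 2 := fun m _ => by
    rw [← norm_add_sq_real, sub_add_sub_cancel]
  rw [Finset.sum_congr rfl hsplit, Finset.sum_add_distrib, Finset.sum_add_distrib,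
    Finset.sum_const, ← Finset.mul_sum, ← inner_sum, hcross, real_inner_smul_right,
    real_inner_self_eq_norm_sq, nsmul_eq_mul, norm_sub_rev y x]
  ring

end Averaging

section BallProjection

variable {d : ℕ}

theorem norm_projBall_sub_le (a : EuclideanSpace ℝ (Fin d)) {r : ℝ} (hr : 0 ≤ r)
    (z : EuclideanSpace ℝ (Fin d)) : ‖projBall a r z - a‖ ≤ r := by
  unfold projBall
  split_ifs with h
  · exact h
  · have ht : 0 < ‖z - a‖ := by linarith
    rw [add_sub_cancel_left, norm_smul, Real.norm_eq_abs, abs_div, abs_of_nonneg hr,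
      abs_of_pos ht, div_mul_cancel₀ _ ht.ne']

theorem norm_sub_projBall (a : EuclideanSpace ℝ (Fin d)) {r : ℝ} (hr : 0 ≤ r)
    (z : EuclideanSpace ℝ (Fin d)) : ‖z - projBall a r z‖ = max (‖z - a‖ - r) 0 := by
  unfold projBall
  split_ifs with h
  · simp [max_eq_right (sub_nonpos.mpr h)]
  · have ht : 0 < ‖z - a‖ := by linarith
    have hfac : z - (a + (r / ‖z - a‖) • (z - a)) = (1 - r / ‖z - a‖) • (z - a) := by module
    have hcoef : 0 ≤ 1 - r / ‖z - a‖ := sub_nonneg.mpr (div_le_one_of_le₀ (by linarith) ht.le)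
    rw [hfac, norm_smul, Real.norm_eq_abs, abs_of_nonneg hcoef, sub_mul,
      div_mul_cancel₀ _ ht.ne', one_mul, max_eq_left (by linarith)]

theorem sum_sq_dist_ball_add_sq_le {ι : Type*} {S : Finset ι} (hS : S.Nonempty)
    (c : ι → EuclideanSpace ℝ (Fin d)) {r : ι → ℝ} (hr : ∀ m ∈ S, 0 ≤ r m)
    {y x : EuclideanSpace ℝ (Fin d)}
    (hx : x = (1 / 2 : ℝ) • y + (1 / (2 * (#S : ℝ))) • ∑ m ∈ S, projBall (c m) (r m) y) :
    ∑ m ∈ S, max (‖x - c m‖ - r m) 0 ^ 2 + ‖x - y‖ ^ 2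
      ≤ ∑ m ∈ S, max (‖y - c m‖ - r m) 0 ^ 2 := by
  have hy : ∑ m ∈ S, max (‖y - c m‖ - r m) 0 ^ 2 = ∑ m ∈ S, ‖y - projBall (c m) (r m) y‖ ^ 2 :=
    Finset.sum_congr rfl fun m hm => by rw [norm_sub_projBall _ (hr m hm)]
  have hx' : ∑ m ∈ S, max (‖x - c m‖ - r m) 0 ^ 2
      ≤ ∑ m ∈ S, ‖x - projBall (c m) (r m) y‖ ^ 2 :=
    Finset.sum_le_sum fun m hm => pow_le_pow_left₀ (le_max_right _ _)
      (max_norm_sub_sub_le_norm_sub (norm_projBall_sub_le _ (hr m hm) y) x) 2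
  have hcard : (1 : ℝ) ≤ #S := by exact_mod_cast hS.card_pos
  rw [hy, sum_norm_sub_sq_eq_of_eq_half_add_mean hS _ hx]
  nlinarith [sq_nonneg ‖x - y‖]

end BallProjection

section UpdateSums

variable {ι α : Type*} [Fintype ι] [DecidableEq ι]

theorem sum_apply_update_add (f : ι → α → ℝ) (x : ι → α) (i₀ : ι) (z : α) :
    ∑ i, f i (Function.update x i₀ z i) + f i₀ (x i₀) = ∑ i, f i (x i) + f i₀ z := by
  simp only [Function.apply_update f x i₀ z, Finset.sum_update_of_mem (Finset.mem_univ i₀),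
    ← Finset.add_sum_erase _ _ (Finset.mem_univ i₀), Finset.sdiff_singleton_eq_erase]
  ring

theorem sum_sum_eq_of_eq_zero_off {B : ι → Finset ι} {i₀ : ι} (hB : i₀ ∉ B i₀) (D : ι → ι → ℝ)
    (hD : ∀ i q, i ≠ i₀ → q ≠ i₀ → D i q = 0) :
    ∑ i, ∑ q ∈ B i, D i q = ∑ q ∈ B i₀, D i₀ q + ∑ i with i₀ ∈ B i, D i i₀ := by
  rw [← Finset.add_sum_erase _ _ (Finset.mem_univ i₀), Finset.sum_filter,
    ← Finset.sum_erase (f := fun i => if i₀ ∈ B i then D i i₀ else 0) (a := i₀) _ (by simp [hB])]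
  congr 1
  refine Finset.sum_congr rfl fun i hi => ?_
  have hi₀ := Finset.ne_of_mem_erase hi
  split_ifs with h
  · exact Finset.sum_eq_single_of_mem i₀ h fun q _ hq => hD i q hi₀ hq
  · exact Finset.sum_eq_zero fun q hq => hD i q hi₀ (ne_of_mem_of_not_mem hq h)

theorem sum_sum_update_add_two_mul {B : ι → Finset ι} (hBirr : ∀ i, i ∉ B i)
    (hBsymm : ∀ i q, q ∈ B i ↔ i ∈ B q) (G : ι → ι → α → α → ℝ)
    (hG : ∀ i q u v, G i q u v = G q i v u) (x : ι → α) (i₀ : ι) (z : α) :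
    ∑ i, ∑ q ∈ B i, G i q (Function.update x i₀ z i) (Function.update x i₀ z q)
        + 2 * ∑ q ∈ B i₀, G i₀ q (x i₀) (x q)
      = ∑ i, ∑ q ∈ B i, G i q (x i) (x q) + 2 * ∑ q ∈ B i₀, G i₀ q z (x q) := by
  set x' := Function.update x i₀ z
  have hx' : ∀ q ∈ B i₀, x' q = x q := fun q hq =>
    Function.update_of_ne (ne_of_mem_of_not_mem hq (hBirr i₀)) z x
  have hx'i₀ : x' i₀ = z := Function.update_self i₀ z x
  have hsplit := sum_sum_eq_of_eq_zero_off (hBirr i₀)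
    (fun i q => G i q (x' i) (x' q) - G i q (x i) (x q)) fun i q hi hq => by
      simp [x', Function.update_of_ne hi, Function.update_of_ne hq]
  have hfilter : ({i | i₀ ∈ B i} : Finset ι) = B i₀ := by
    ext i; simp [hBsymm i₀ i]
  have hrow : ∑ q ∈ B i₀, (G i₀ q (x' i₀) (x' q) - G i₀ q (x i₀) (x q))
      = ∑ q ∈ B i₀, (G i₀ q z (x q) - G i₀ q (x i₀) (x q)) :=
    Finset.sum_congr rfl fun q hq => by rw [hx' q hq, hx'i₀]
  have hcol : ∑ q ∈ B i₀, (G q i₀ (x' q) (x' i₀) - G q i₀ (x q) (x i₀))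
      = ∑ q ∈ B i₀, (G i₀ q z (x q) - G i₀ q (x i₀) (x q)) :=
    Finset.sum_congr rfl fun q hq => by rw [hx' q hq, hx'i₀, hG q, hG q]
  simp only [Finset.sum_sub_distrib] at hsplit hrow hcol
  rw [hfilter] at hsplit
  linarith

end UpdateSums

section Objective

variable {d n : ℕ} {J : Type*} (a : J → EuclideanSpace ℝ (Fin d)) (A : Fin n → Finset J)
  (dhat : Fin n → J → ℝ) (B : Fin n → Finset (Fin n)) (lhat : Fin n → Fin n → ℝ)

/-- The part of `obj` that depends on block `i`, as a function of its position `z`; each pair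
term is counted once here but twice in `obj`. -/
noncomputable def blockCost (x : Fin n → EuclideanSpace ℝ (Fin d)) (i : Fin n)
    (z : EuclideanSpace ℝ (Fin d)) : ℝ :=
  ∑ j ∈ A i, max (‖z - a j‖ - dhat i j) 0 ^ 2 + ∑ q ∈ B i, max (‖z - x q‖ - lhat i q) 0 ^ 2

theorem obj_nonneg (x : Fin n → EuclideanSpace ℝ (Fin d)) : 0 ≤ obj a A dhat B lhat x := by
  unfold obj; positivity

theorem obj_update_add_blockCost (hBirr : ∀ i : Fin n, i ∉ B i)
    (hBsymm : ∀ i q : Fin n, q ∈ B i ↔ i ∈ B q) (hlsymm : ∀ i q : Fin n, lhat i q = lhat q i)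
    (x : Fin n → EuclideanSpace ℝ (Fin d)) (i : Fin n) (z : EuclideanSpace ℝ (Fin d)) :
    obj a A dhat B lhat (Function.update x i z) + blockCost a A dhat B lhat x i (x i)
      = obj a A dhat B lhat x + blockCost a A dhat B lhat x i z := by
  have hA := sum_apply_update_add
    (fun i u => ∑ j ∈ A i, max (‖u - a j‖ - dhat i j) 0 ^ 2) x i z
  have hB := sum_sum_update_add_two_mul hBirr hBsymm
    (fun i q u v => max (‖u - v‖ - lhat i q) 0 ^ 2)
    (fun i q u v => by rw [norm_sub_rev, hlsymm]) x i z
  unfold obj blockCost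
  linarith

theorem blockCost_add_sq_le {i : Fin n} (hdhat : ∀ j ∈ A i, 0 ≤ dhat i j)
    (hlhat : ∀ q ∈ B i, 0 ≤ lhat i q) (hcard : 1 ≤ #(A i) + #(B i)) (x : Fin n → EuclideanSpace ℝ (Fin d))
    {z : EuclideanSpace ℝ (Fin d)}
    (hz : z = (1 / 2 : ℝ) • x i + (1 / (2 * ((#(A i) : ℝ) + (#(B i) : ℝ)))) •
      ((∑ j ∈ A i, projBall (a j) (dhat i j) (x i))
        + ∑ q ∈ B i, projBall (x q) (lhat i q) (x i))) :
    blockCost a A dhat B lhat x i z + ‖z - x i‖ ^ 2 ≤ blockCost a A dhat B lhat x i (x i) := by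
  have hS : ((A i).disjSum (B i)).Nonempty := by
    rw [← Finset.card_pos, Finset.card_disjSum]; omega
  have hr : ∀ m ∈ (A i).disjSum (B i), 0 ≤ Sum.elim (dhat i) (lhat i) m := by
    rintro (j | q) hm
    · exact hdhat j (Finset.inl_mem_disjSum.mp hm)
    · exact hlhat q (Finset.inr_mem_disjSum.mp hm)
  have h := sum_sq_dist_ball_add_sq_le hS (Sum.elim a x) hr (y := x i) (x := z) (by
    rw [hz, Finset.sum_disjSum, Finset.card_disjSum, Nat.cast_add]; rfl)
  simpa only [blockCost, Finset.sum_disjSum, Sum.elim_inl, Sum.elim_inr] using h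

end Objective

section Interm

variable {d n : ℕ} (X : ℕ → Fin n → EuclideanSpace ℝ (Fin d)) (k : ℕ)

theorem interm_zero : interm X k 0 = X k := by
  funext t; simp [interm]

theorem interm_of_le {m : ℕ} (hm : n ≤ m) : interm X k m = X (k + 1) := by
  funext t; simp [interm, t.isLt.trans_le hm]

theorem interm_apply_self (i : Fin n) : interm X k i i = X k i := by
  simp [interm]

theorem interm_succ (i : Fin n) :
    interm X k (i + 1) = Function.update (interm X k i) i (X (k + 1) i) := by
  funext t
  rcases eq_or_ne t i with rfl | ht
  · simp [interm]
  · have : (t : ℕ) < i + 1 ↔ (t : ℕ) < i := by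
      have := Fin.val_ne_of_ne ht; omega
    simp [interm, Function.update_of_ne ht, this]

theorem norm_interm_succ_sub (i : Fin n) :
    ‖interm X k (i + 1) - interm X k i‖ = ‖X (k + 1) i - X k i‖ := by
  have : interm X k (i + 1) - interm X k i = Pi.single i (X (k + 1) i - X k i) := by
    rw [interm_succ]
    funext t
    rcases eq_or_ne t i with rfl | ht
    · simp [interm_apply_self]
    · simp [Function.update_of_ne ht, Pi.single_eq_of_ne ht]
  rw [this, Pi.norm_single]

end Interm

namespace IsPPM

variable {d n : ℕ} {J : Type*} {a : J → EuclideanSpace ℝ (Fin d)} {A : Fin n → Finset J}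
  {dhat : Fin n → J → ℝ} {B : Fin n → Finset (Fin n)} {lhat : Fin n → Fin n → ℝ}
  {X : ℕ → Fin n → EuclideanSpace ℝ (Fin d)}

theorem eq_step_interm (hX : IsPPM a A dhat B lhat X) (k : ℕ) (i : Fin n) :
    X (k + 1) i = (1 / 2 : ℝ) • interm X k i i
      + (1 / (2 * ((#(A i) : ℝ) + (#(B i) : ℝ)))) •
        ((∑ j ∈ A i, projBall (a j) (dhat i j) (interm X k i i))
          + ∑ q ∈ B i, projBall (interm X k i q) (lhat i q) (interm X k i i)) := by
  rw [interm_apply_self, hX k i]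
  rfl

variable (hdhat : ∀ i, ∀ j ∈ A i, 0 ≤ dhat i j) (hlhat : ∀ i, ∀ q ∈ B i, 0 ≤ lhat i q)
  (hBirr : ∀ i : Fin n, i ∉ B i) (hBsymm : ∀ i q : Fin n, q ∈ B i ↔ i ∈ B q)
  (hlsymm : ∀ i q : Fin n, lhat i q = lhat q i) (hcard : ∀ i : Fin n, 1 ≤ #(A i) + #(B i))
include hdhat hlhat hBirr hBsymm hlsymm hcard

theorem obj_interm_succ_add_sq_le (hX : IsPPM a A dhat B lhat X) (k : ℕ) (i : Fin n) :
    obj a A dhat B lhat (interm X k (i + 1)) + ‖X (k + 1) i - X k i‖ ^ 2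
      ≤ obj a A dhat B lhat (interm X k i) := by
  have hupd := obj_update_add_blockCost a A dhat B lhat hBirr hBsymm hlsymm
    (interm X k i) i (X (k + 1) i)
  have hstep := blockCost_add_sq_le a A dhat B lhat (hdhat i) (hlhat i) (hcard i)
    (interm X k i) (hX.eq_step_interm k i)
  rw [← interm_succ, interm_apply_self] at hupd
  rw [interm_apply_self] at hstep
  linarith

theorem obj_succ_add_sq_le (hX : IsPPM a A dhat B lhat X) (k : ℕ) (i : Fin n) :
    obj a A dhat B lhat (X (k + 1)) + ‖X (k + 1) i - X k i‖ ^ 2 ≤ obj a A dhat B lhat (X k) := by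
  have hanti : Antitone fun m => obj a A dhat B lhat (interm X k m) := by
    refine antitone_nat_of_succ_le fun m => ?_
    rcases lt_or_ge m n with hm | hm
    · have := obj_interm_succ_add_sq_le hdhat hlhat hBirr hBsymm hlsymm hcard hX k ⟨m, hm⟩
      linarith [sq_nonneg ‖X (k + 1) ⟨m, hm⟩ - X k ⟨m, hm⟩‖]
    · rw [interm_of_le X k hm, interm_of_le X k (hm.trans m.le_succ)]
  have hafter : obj a A dhat B lhat (X (k + 1)) ≤ obj a A dhat B lhat (interm X k (i + 1)) := by
    rw [← interm_of_le X k le_rfl]; exact hanti i.isLt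
  have hbefore : obj a A dhat B lhat (interm X k i) ≤ obj a A dhat B lhat (X k) := by
    rw [← interm_zero X k]; exact hanti (Nat.zero_le _)
  linarith [obj_interm_succ_add_sq_le hdhat hlhat hBirr hBsymm hlsymm hcard hX k i]

end IsPPM

theorem tendsto_zero_of_add_sq_le {u e : ℕ → ℝ} (hu : ∀ k, 0 ≤ u k) (he : ∀ k, 0 ≤ e k)
    (h : ∀ k, u (k + 1) + e k ^ 2 ≤ u k) : Tendsto e atTop (nhds 0) := by
  have hsum : Summable fun k => e k ^ 2 := by
    refine summable_of_sum_range_le (c := u 0) (fun k => sq_nonneg _) fun K => ?_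
    calc ∑ k ∈ range K, e k ^ 2 ≤ ∑ k ∈ range K, (u k - u (k + 1)) :=
          Finset.sum_le_sum fun k _ => by linarith [h k]
      _ = u 0 - u K := Finset.sum_range_sub' u K
      _ ≤ u 0 := by linarith [hu K]
  simpa [Real.sqrt_sq (he _)] using hsum.tendsto_atTop_zero.sqrt

theorem stmt8_general (d n : ℕ) {J : Type*}
    (a : J → EuclideanSpace ℝ (Fin d))
    (A : Fin n → Finset J) (dhat : Fin n → J → ℝ)
    (B : Fin n → Finset (Fin n)) (lhat : Fin n → Fin n → ℝ)
    (hdhat : ∀ i, ∀ j ∈ A i, 0 ≤ dhat i j)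
    (hlhat : ∀ i, ∀ q ∈ B i, 0 ≤ lhat i q)
    (hBirr : ∀ i : Fin n, i ∉ B i)
    (hBsymm : ∀ i q : Fin n, q ∈ B i ↔ i ∈ B q)
    (hlsymm : ∀ i q : Fin n, lhat i q = lhat q i)
    (hcard : ∀ i : Fin n, 1 ≤ (A i).card + (B i).card)
    (X : ℕ → Fin n → EuclideanSpace ℝ (Fin d))
    (hX : IsPPM a A dhat B lhat X) :
    (∀ (k : ℕ) (i : Fin n),
      ‖interm X k ((i : ℕ) + 1) - interm X k (i : ℕ)‖ = ‖X (k + 1) i - X k i‖) ∧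
    (∀ i : Fin n,
      Tendsto (fun k : ℕ => ‖X (k + 1) i - X k i‖) atTop (nhds 0)) :=
  ⟨norm_interm_succ_sub X, fun i =>
    tendsto_zero_of_add_sq_le (fun k => obj_nonneg a A dhat B lhat (X k)) (fun _ => norm_nonneg _)
    (hX.obj_succ_add_sq_le hdhat hlhat hBirr hBsymm hlsymm hcard · i)⟩

theorem stmt8 (d n : ℕ) (hd : 1 ≤ d) (hn : 1 ≤ n) {J : Type*} [Fintype J]
    (a : J → EuclideanSpace ℝ (Fin d))
    (A : Fin n → Finset J) (dhat : Fin n → J → ℝ)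
    (B : Fin n → Finset (Fin n)) (lhat : Fin n → Fin n → ℝ)
    (hdhat : ∀ i, ∀ j ∈ A i, 0 ≤ dhat i j)
    (hlhat : ∀ i, ∀ q ∈ B i, 0 ≤ lhat i q)
    (hBirr : ∀ i : Fin n, i ∉ B i)
    (hBsymm : ∀ i q : Fin n, q ∈ B i ↔ i ∈ B q)
    (hlsymm : ∀ i q : Fin n, lhat i q = lhat q i)
    (hcard : ∀ i : Fin n, 1 ≤ (A i).card + (B i).card)
    (X : ℕ → Fin n → EuclideanSpace ℝ (Fin d))
    (hX : IsPPM a A dhat B lhat X) :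
    (∀ (k : ℕ) (i : Fin n),
      ‖interm X k ((i : ℕ) + 1) - interm X k (i : ℕ)‖ = ‖X (k + 1) i - X k i‖) ∧
    (∀ i : Fin n,
      Tendsto (fun k : ℕ => ‖X (k + 1) i - X k i‖) atTop (nhds 0)) :=
  stmt8_general d n a A dhat B lhat hdhat hlhat hBirr hBsymm hlsymm hcard X hX
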